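/- arXiv:1703.09616 — 5 statements merged into one kernel-verified Lean document; each statement's English description precedes it below -/
import Mathlib

section
/- For every integer n ≥ 8 with M = ⌊n/4⌋, every strategy S, and every i with 2 ≤ i ≤ M, the total weight increases by at least 4 when passing from p_S^i to p_S^{i−1}: ∑_{(x,y)∈ℤ²} p_S^{i−1}(x, y) ≥ 4 + ∑_{(x,y)∈ℤ²} p_S^i(x, y). -/
open Finset

/-- One step of the backward recursion for the catch probabilities: given the survivor's
position `c = (x_i, y_i)` in round `i` and the function `p_S^{i+1}`, produce `p_S^i`. -/
noncomputable def pstep (c : ℤ × ℤ) (f : ℤ × ℤ → ℝ) : ℤ × ℤ → ℝ :=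
  fun q =>
    if |q.1 - c.1| + |q.2 - c.2| ≤ 1 then 1
    else if q.1 ≠ c.1 ∧ q.2 ≠ c.2 then
      (f (q.1 + Int.sign (c.1 - q.1), q.2) + f (q.1, q.2 + Int.sign (c.2 - q.2))) / 2
    else if q.1 = c.1 then f (q.1, q.2 + Int.sign (c.2 - q.2))
    else f (q.1 + Int.sign (c.1 - q.1), q.2)

/-- `pAux S M j` is `p_S^{M-j}`: `pAux S M 0 = p_S^M` and each further step applies the
backward recursion centred at the survivor's position `S (M - (j+1))`. -/
noncomputable def pAux (S : ℕ → ℤ × ℤ) (M : ℕ) : ℕ → ℤ × ℤ → ℝ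
  | 0 => fun q => if |q.1 - (S M).1| + |q.2 - (S M).2| ≤ 1 then 1 else 0
  | j + 1 => pstep (S (M - (j + 1))) (pAux S M j)

/-- `pS S M i = p_S^i` (for `1 ≤ i ≤ M`). -/
noncomputable def pS (S : ℕ → ℤ × ℤ) (M : ℕ) (i : ℕ) : ℤ × ℤ → ℝ :=
  pAux S M (M - i)

/-- `t(S) = ∑_{(x,y) ∈ ℤ²} p_S(x,y)` where `p_S = p_S^1`. -/
noncomputable def tS (S : ℕ → ℤ × ℤ) (M : ℕ) : ℝ :=
  ∑ᶠ q : ℤ × ℤ, pS S M 1 q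

/-- A strategy for the first `M` moves: a sequence of vertices of `ℤ²`, consecutive ones at
distance at most `1`, finishing at `(0,0)`. -/
def IsStrategy (S : ℕ → ℤ × ℤ) (M : ℕ) : Prop :=
  S M = (0, 0) ∧
    ∀ i, 1 ≤ i → i < M → |(S (i + 1)).1 - (S i).1| + |(S (i + 1)).2 - (S i).2| ≤ 1

/-!
Outside the diamond `D = {q | |q.1 - c.1| + |q.2 - c.2| ≤ 1}`, `pstep c f q` is the average of
`f` at two points `stepTowardX c q`, `stepTowardY c q` one step closer to `c`, while `pstep c f = 1`
on the five points of `D`. Each of the two step maps has a right inverse on `ℤ² \ {c}` (step away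
from `c`) with values outside `D`, so each half of `∑ pstep c f` over the complement of `D` is at
least `½ ∑_{r ≠ c} f r`. Hence `∑ pstep c f ≥ 5 + ∑ f - f c ≥ 4 + ∑ f`, as `f ≤ 1`.
-/

open Function

lemma hasFiniteSupport_indicator {α M : Type*} [Zero M] {f : α → M} (s : Set α)
    (hf : f.HasFiniteSupport) : (s.indicator f).HasFiniteSupport :=
  (hf.inter_of_right s).subset Set.support_indicator.subset

lemma hasFiniteSupport_comp_of_sub_mem_Icc {α M : Type*} [AddCommGroup α] [PartialOrder α]
    [IsOrderedAddMonoid α] [LocallyFiniteOrder α] [Zero M] {f : α → M} {φ : α → α} {a b : α}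
    (hf : f.HasFiniteSupport) (hφ : ∀ q, φ q - q ∈ Set.Icc a b) : (f ∘ φ).HasFiniteSupport := by
  refine Set.Finite.preimage' hf fun r _ => (Set.finite_Icc (r - b) (r - a)).subset ?_
  rintro q rfl
  exact ⟨sub_le_comm.mp (hφ q).2, le_sub_comm.mp (hφ q).1⟩

lemma finsum_eq_add_finsum_mem_compl {α M : Type*} [AddCommMonoid M] {f : α → M} (a : α)
    (hf : f.HasFiniteSupport) :
    ∑ᶠ x, f x = f a + ∑ᶠ x ∈ ({a}ᶜ : Set α), f x := by
  rw [← finsum_mem_insert' f (by simp) (hf.inter_of_right _), Set.insert_eq, Set.union_compl_self,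
    finsum_mem_univ]

lemma finsum_mem_le_finsum_indicator_comp {α β M : Type*} [AddCommMonoid M] [PartialOrder M]
    [IsOrderedAddMonoid M] {f : β → M} {φ : α → β} {ψ : β → α} {s : Set α} {t : Set β}
    (hmaps : Set.MapsTo ψ t s) (hinv : Set.LeftInvOn φ ψ t) (hf : 0 ≤ f)
    (hfin : (f ∘ φ).HasFiniteSupport) :
    ∑ᶠ r ∈ t, f r ≤ ∑ᶠ q, s.indicator (f ∘ φ) q :=
  calc ∑ᶠ r ∈ t, f r = ∑ᶠ r ∈ t, s.indicator (f ∘ φ) (ψ r) :=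
        finsum_mem_congr rfl fun r hr => by simp [Set.indicator_of_mem (hmaps hr), hinv hr]
    _ = ∑ᶠ q ∈ ψ '' t, s.indicator (f ∘ φ) q := (finsum_mem_image hinv.injOn).symm
    _ ≤ ∑ᶠ q, s.indicator (f ∘ φ) q := by
        have hfin' := hasFiniteSupport_indicator s hfin
        rw [finsum_mem_def]
        exact finsum_le_finsum' (hasFiniteSupport_indicator _ hfin') hfin'
          (Set.indicator_le_self' fun q _ => Set.indicator_nonneg (fun q _ => hf (φ q)) q)

def diamond (c : ℤ × ℤ) : Set (ℤ × ℤ) := {q | |q.1 - c.1| + |q.2 - c.2| ≤ 1}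

lemma mem_diamond {c q : ℤ × ℤ} : q ∈ diamond c ↔ |q.1 - c.1| + |q.2 - c.2| ≤ 1 := Iff.rfl

lemma diamond_eq (c : ℤ × ℤ) :
    diamond c = ↑({c, c + (1, 0), c - (1, 0), c + (0, 1), c - (0, 1)} : Finset (ℤ × ℤ)) := by
  ext ⟨x, y⟩
  simp only [mem_diamond, Finset.coe_insert, Finset.coe_singleton, Set.mem_insert_iff,
    Set.mem_singleton_iff, Prod.ext_iff, Prod.fst_add, Prod.snd_add, Prod.fst_sub, Prod.snd_sub]
  grind

lemma hasFiniteSupport_indicator_diamond (c : ℤ × ℤ) :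
    ((diamond c).indicator (1 : ℤ × ℤ → ℝ)).HasFiniteSupport :=
  (diamond_eq c ▸ Finset.finite_toSet _ : (diamond c).Finite).subset Set.support_indicator_subset

lemma finsum_indicator_diamond (c : ℤ × ℤ) : ∑ᶠ q, (diamond c).indicator 1 q = (5 : ℝ) := by
  rw [← finsum_mem_def, diamond_eq, finsum_mem_coe_finset]
  simp only [Pi.one_apply, Finset.sum_const, nsmul_one]
  rw [card_insert_of_notMem, card_insert_of_notMem, card_insert_of_notMem, card_pair] <;>
    simp [Prod.ext_iff] <;> omega

def stepTowardX (c q : ℤ × ℤ) : ℤ × ℤ :=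
  if q.1 ≠ c.1 then (q.1 + (c.1 - q.1).sign, q.2) else (q.1, q.2 + (c.2 - q.2).sign)

def stepTowardY (c q : ℤ × ℤ) : ℤ × ℤ :=
  if q.2 ≠ c.2 then (q.1, q.2 + (c.2 - q.2).sign) else (q.1 + (c.1 - q.1).sign, q.2)

def stepAwayX (c r : ℤ × ℤ) : ℤ × ℤ :=
  if r.1 ≠ c.1 then (r.1 + (r.1 - c.1).sign, r.2) else (r.1, r.2 + (r.2 - c.2).sign)

def stepAwayY (c r : ℤ × ℤ) : ℤ × ℤ :=
  if r.2 ≠ c.2 then (r.1, r.2 + (r.2 - c.2).sign) else (r.1 + (r.1 - c.1).sign, r.2)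

lemma stepTowardX_sub_mem_Icc (c q : ℤ × ℤ) : stepTowardX c q - q ∈ Set.Icc (-1) 1 := by
  simp only [stepTowardX, Set.mem_Icc, Prod.le_def]
  split_ifs <;> simp <;> grind

lemma stepTowardY_sub_mem_Icc (c q : ℤ × ℤ) : stepTowardY c q - q ∈ Set.Icc (-1) 1 := by
  simp only [stepTowardY, Set.mem_Icc, Prod.le_def]
  split_ifs <;> simp <;> grind

lemma mapsTo_stepAwayX (c : ℤ × ℤ) : Set.MapsTo (stepAwayX c) {c}ᶜ (diamond c)ᶜ := by
  intro r hr
  simp only [stepAwayX, Set.mem_compl_iff, Set.mem_singleton_iff, mem_diamond, Prod.ext_iff] at *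
  split_ifs <;> grind

lemma mapsTo_stepAwayY (c : ℤ × ℤ) : Set.MapsTo (stepAwayY c) {c}ᶜ (diamond c)ᶜ := by
  intro r hr
  simp only [stepAwayY, Set.mem_compl_iff, Set.mem_singleton_iff, mem_diamond, Prod.ext_iff] at *
  split_ifs <;> grind

lemma leftInvOn_stepTowardX (c : ℤ × ℤ) : Set.LeftInvOn (stepTowardX c) (stepAwayX c) {c}ᶜ := by
  intro r hr
  simp only [stepAwayX, stepTowardX, Prod.ext_iff] at *
  split_ifs <;> grind

lemma leftInvOn_stepTowardY (c : ℤ × ℤ) : Set.LeftInvOn (stepTowardY c) (stepAwayY c) {c}ᶜ := by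
  intro r hr
  simp only [stepAwayY, stepTowardY, Prod.ext_iff] at *
  split_ifs <;> grind

lemma pstep_eq_indicator (c : ℤ × ℤ) (f : ℤ × ℤ → ℝ) :
    pstep c f = fun q => (diamond c).indicator 1 q +
      ((diamond c)ᶜ.indicator (f ∘ stepTowardX c) q +
        (diamond c)ᶜ.indicator (f ∘ stepTowardY c) q) / 2 := by
  ext q
  by_cases hq : q ∈ diamond c
  · simp [pstep, hq, mem_diamond.mp hq]
  · rw [mem_diamond] at hq
    simp only [pstep, hq, if_false, Set.indicator, mem_diamond, Set.mem_compl_iff,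
      not_false_eq_true, if_true, comp_apply, stepTowardX, stepTowardY]
    split_ifs <;> simp_all

section pstep

variable {c : ℤ × ℤ} {f : ℤ × ℤ → ℝ}

lemma hasFiniteSupport_comp_stepTowardX (hf : f.HasFiniteSupport) :
    (f ∘ stepTowardX c).HasFiniteSupport :=
  hasFiniteSupport_comp_of_sub_mem_Icc hf (stepTowardX_sub_mem_Icc c)

lemma hasFiniteSupport_comp_stepTowardY (hf : f.HasFiniteSupport) :
    (f ∘ stepTowardY c).HasFiniteSupport :=
  hasFiniteSupport_comp_of_sub_mem_Icc hf (stepTowardY_sub_mem_Icc c)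

lemma hasFiniteSupport_pstep (hf : f.HasFiniteSupport) : (pstep c f).HasFiniteSupport := by
  have hX := hasFiniteSupport_indicator (diamond c)ᶜ (hasFiniteSupport_comp_stepTowardX (c := c) hf)
  have hY := hasFiniteSupport_indicator (diamond c)ᶜ (hasFiniteSupport_comp_stepTowardY (c := c) hf)
  rw [pstep_eq_indicator]
  exact (hasFiniteSupport_indicator_diamond c).add (by fun_prop (disch := simp))

lemma finsum_pstep (hf : f.HasFiniteSupport) :
    ∑ᶠ q, pstep c f q = 5 + (∑ᶠ q, (diamond c)ᶜ.indicator (f ∘ stepTowardX c) q +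
      ∑ᶠ q, (diamond c)ᶜ.indicator (f ∘ stepTowardY c) q) / 2 := by
  have hX := hasFiniteSupport_indicator (diamond c)ᶜ (hasFiniteSupport_comp_stepTowardX (c := c) hf)
  have hY := hasFiniteSupport_indicator (diamond c)ᶜ (hasFiniteSupport_comp_stepTowardY (c := c) hf)
  rw [pstep_eq_indicator, finsum_add_distrib (hasFiniteSupport_indicator_diamond c)
    (by fun_prop (disch := simp)), finsum_indicator_diamond]
  simp only [div_eq_mul_inv]
  rw [← finsum_mul, finsum_add_distrib hX hY]

theorem four_add_finsum_le_finsum_pstep (hf : 0 ≤ f) (hfc : f c ≤ 1)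
    (hfin : f.HasFiniteSupport) : 4 + ∑ᶠ q, f q ≤ ∑ᶠ q, pstep c f q := by
  have hX := finsum_mem_le_finsum_indicator_comp (mapsTo_stepAwayX c) (leftInvOn_stepTowardX c)
    hf (hasFiniteSupport_comp_stepTowardX hfin)
  have hY := finsum_mem_le_finsum_indicator_comp (mapsTo_stepAwayY c) (leftInvOn_stepTowardY c)
    hf (hasFiniteSupport_comp_stepTowardY hfin)
  linarith [finsum_pstep (c := c) hfin, finsum_eq_add_finsum_mem_compl c hfin]

lemma pstep_nonneg (hf : 0 ≤ f) : 0 ≤ pstep c f := by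
  intro q
  show 0 ≤ pstep c f q
  replace hf : ∀ q, 0 ≤ f q := hf
  unfold pstep
  split_ifs
  exacts [zero_le_one, div_nonneg (add_nonneg (hf _) (hf _)) zero_le_two, hf _, hf _]

lemma pstep_le_one (hf : f ≤ 1) : pstep c f ≤ 1 := by
  intro q
  show pstep c f q ≤ 1
  replace hf : ∀ q, f q ≤ 1 := hf
  unfold pstep
  split_ifs
  exacts [le_rfl, by linarith [hf (q.1 + (c.1 - q.1).sign, q.2), hf (q.1, q.2 + (c.2 - q.2).sign)],
    hf _, hf _]

end pstep

section pAux

variable (S : ℕ → ℤ × ℤ) (M : ℕ)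

lemma pAux_zero : pAux S M 0 = (diamond (S M)).indicator 1 := by
  ext q
  simp [pAux, Set.indicator, mem_diamond]

lemma pAux_nonneg (j : ℕ) : 0 ≤ pAux S M j := by
  induction j with
  | zero => exact pAux_zero S M ▸ Set.indicator_nonneg fun _ _ => zero_le_one
  | succ j ih => exact pstep_nonneg ih

lemma pAux_le_one (j : ℕ) : pAux S M j ≤ 1 := by
  induction j with
  | zero => exact pAux_zero S M ▸ Set.indicator_le_self' fun _ _ => zero_le_one
  | succ j ih => exact pstep_le_one ih

lemma hasFiniteSupport_pAux (j : ℕ) : (pAux S M j).HasFiniteSupport := by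
  induction j with
  | zero => exact pAux_zero S M ▸ hasFiniteSupport_indicator_diamond (S M)
  | succ j ih => exact hasFiniteSupport_pstep ih

lemma pS_sub_one {i : ℕ} (hi : 1 ≤ i) (hiM : i ≤ M) :
    pS S M (i - 1) = pstep (S (i - 1)) (pS S M i) := by
  rw [pS, show M - (i - 1) = M - i + 1 by omega, pAux, show M - (M - i + 1) = i - 1 by omega, pS]

end pAux

theorem stmt_3_general (M : ℕ)
    (S : ℕ → ℤ × ℤ)
    (i : ℕ) (hi1 : 2 ≤ i) (hi2 : i ≤ M) :
    4 + ∑ᶠ q : ℤ × ℤ, pS S M i q ≤ ∑ᶠ q : ℤ × ℤ, pS S M (i - 1) q := by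
  rw [pS_sub_one S M (by omega) hi2]
  exact four_add_finsum_le_finsum_pstep (pAux_nonneg S M _) (pAux_le_one S M _ _)
    (hasFiniteSupport_pAux S M _)

/-- When passing from `p_S^i` to `p_S^{i-1}` (for `2 ≤ i ≤ M`), the total weight
increases by at least `4`. -/
theorem stmt_3 (n : ℕ) (hn : 8 ≤ n) (M : ℕ) (hM : M = n / 4)
    (S : ℕ → ℤ × ℤ) (hS : IsStrategy S M)
    (i : ℕ) (hi1 : 2 ≤ i) (hi2 : i ≤ M) :
    4 + ∑ᶠ q : ℤ × ℤ, pS S M i q ≤ ∑ᶠ q : ℤ × ℤ, pS S M (i - 1) q :=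
  stmt_3_general M S i hi1 hi2
end

section
/- For every integer n ≥ 8 with M = ⌊n/4⌋ and every strategy S, one has t(S) ≥ 4M = 4⌊n/4⌋. Consequently t_n := min over all strategies S of t(S) satisfies t_n ≥ 4⌊n/4⌋, so t_n ≥ n − 4 ∼ n. -/
open Finset

/-!
Outside the diamond of five cells around `c`, the step `pstep c f` averages `f` over the two
cells a pursuer at `q` may move to, while on the diamond it is `1`. Every cell `r ≠ c` is the
image, under either move, of a cell outside the diamond (one step further away from `c`), so the
part of `∑ pstep c f` outside the diamond is at least `∑ f - f c ≥ ∑ f - 1`. Each of the `M - 1`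
backward steps therefore adds at least `4` to the total mass, and `p_S^M = pstep (S M) 0` already
has mass `5`.
-/

open Function

namespace Zombies

lemma abs_sign_le_one (x : ℤ) : |x.sign| ≤ 1 := by
  rcases Int.sign_trichotomy x with h | h | h <;> simp [h]

def diamond (c : ℤ × ℤ) : Finset (ℤ × ℤ) :=
  {c, (c.1 + 1, c.2), (c.1 - 1, c.2), (c.1, c.2 + 1), (c.1, c.2 - 1)}

lemma mem_diamond {c q : ℤ × ℤ} : q ∈ diamond c ↔ |q.1 - c.1| + |q.2 - c.2| ≤ 1 := by
  simp only [diamond, Finset.mem_insert, Finset.mem_singleton, Prod.ext_iff, Int.abs_eq_natAbs]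
  omega

lemma card_diamond (c : ℤ × ℤ) : (diamond c).card = 5 := by
  simp only [diamond]
  repeat rw [Finset.card_insert_of_notMem
    (by simp only [Finset.mem_insert, Finset.mem_singleton, Prod.ext_iff]; omega)]
  rfl

def towardX (c q : ℤ × ℤ) : ℤ × ℤ := (q.1 + (c.1 - q.1).sign, q.2)

def towardY (c q : ℤ × ℤ) : ℤ × ℤ := (q.1, q.2 + (c.2 - q.2).sign)

/-- The two moves towards `c`, each taken with probability `1/2` off the axes through `c`; on
such an axis both are the forced move. -/
def moveH (c q : ℤ × ℤ) : ℤ × ℤ := if q.1 = c.1 then towardY c q else towardX c q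

def moveV (c q : ℤ × ℤ) : ℤ × ℤ := if q.2 = c.2 then towardX c q else towardY c q

lemma pstep_of_mem_diamond {c q : ℤ × ℤ} (f : ℤ × ℤ → ℝ) (hq : q ∈ diamond c) :
    pstep c f q = 1 :=
  if_pos (mem_diamond.mp hq)

lemma pstep_of_notMem_diamond {c q : ℤ × ℤ} (f : ℤ × ℤ → ℝ) (hq : q ∉ diamond c) :
    pstep c f q = (f (moveH c q) + f (moveV c q)) / 2 := by
  rw [mem_diamond] at hq
  rw [pstep, if_neg hq]
  by_cases h1 : q.1 = c.1 <;> by_cases h2 : q.2 = c.2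
  · exact absurd (by simp [h1, h2]) hq
  all_goals simp [moveH, moveV, towardX, towardY, h1, h2]

lemma mem_diamond_moveH (c q : ℤ × ℤ) : q ∈ diamond (moveH c q) := by
  rw [mem_diamond]
  unfold moveH towardX towardY
  split_ifs <;> simp [abs_sign_le_one]

lemma mem_diamond_moveV (c q : ℤ × ℤ) : q ∈ diamond (moveV c q) := by
  rw [mem_diamond]
  unfold moveV towardX towardY
  split_ifs <;> simp [abs_sign_le_one]

lemma exists_step_away {a b : ℤ} (h : a ≠ b) :
    ∃ a', a' + (b - a').sign = a ∧ 2 ≤ |a' - b| ∧ |a' - a| ≤ 1 := by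
  simp only [Int.abs_eq_natAbs]
  rcases lt_or_gt_of_ne h with h | h
  · exact ⟨a - 1, by rw [Int.sign_eq_one_of_pos (by omega)]; ring, by omega, by omega⟩
  · exact ⟨a + 1, by rw [Int.sign_eq_neg_one_of_neg (by omega)]; ring, by omega, by omega⟩

lemma exists_moveH_eq {c r : ℤ × ℤ} (hr : r ≠ c) :
    ∃ q ∉ diamond c, q ∈ diamond r ∧ moveH c q = r := by
  simp only [mem_diamond]
  by_cases h1 : r.1 = c.1
  · obtain ⟨b, hb, hfar, hnear⟩ := exists_step_away fun h2 ↦ hr (Prod.ext h1 h2)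
    refine ⟨(r.1, b), ?_, ?_, ?_⟩ <;> simp [moveH, towardY, h1, hb, hnear, Prod.ext_iff]
    linarith
  · obtain ⟨a, ha, hfar, hnear⟩ := exists_step_away h1
    refine ⟨(a, r.2), ?_, ?_, ?_⟩
    · linarith [abs_nonneg (r.2 - c.2)]
    · simpa using hnear
    · have : a ≠ c.1 := by rintro rfl; simp at hfar
      simp [moveH, towardX, this, ha]

lemma exists_moveV_eq {c r : ℤ × ℤ} (hr : r ≠ c) :
    ∃ q ∉ diamond c, q ∈ diamond r ∧ moveV c q = r := by
  simp only [mem_diamond]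
  by_cases h2 : r.2 = c.2
  · obtain ⟨a, ha, hfar, hnear⟩ := exists_step_away fun h1 ↦ hr (Prod.ext h1 h2)
    refine ⟨(a, r.2), ?_, ?_, ?_⟩ <;> simp [moveV, towardX, h2, ha, hnear, Prod.ext_iff]
    linarith
  · obtain ⟨b, hb, hfar, hnear⟩ := exists_step_away h2
    refine ⟨(r.1, b), ?_, ?_, ?_⟩
    · linarith [abs_nonneg (r.1 - c.1)]
    · simpa using hnear
    · have : b ≠ c.2 := by rintro rfl; simp at hfar
      simp [moveV, towardY, this, hb]

lemma support_pstep_subset {c : ℤ × ℤ} {f : ℤ × ℤ → ℝ} {T : Finset (ℤ × ℤ)}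
    (hT : support f ⊆ T) : support (pstep c f) ⊆ ↑(diamond c ∪ T.biUnion diamond) := by
  intro q hq
  by_cases hD : q ∈ diamond c
  · exact Finset.mem_union_left _ hD
  rw [mem_support, pstep_of_notMem_diamond f hD] at hq
  have : f (moveH c q) ≠ 0 ∨ f (moveV c q) ≠ 0 := by
    by_contra! h
    simp [h] at hq
  refine Finset.mem_union_right _ (Finset.mem_biUnion.mpr ?_)
  rcases this with h | h
  · exact ⟨_, hT h, mem_diamond_moveH c q⟩
  · exact ⟨_, hT h, mem_diamond_moveV c q⟩

lemma sum_le_sum_comp_of_surjOn {ι κ N : Type*} [AddCommMonoid N] [PartialOrder N]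
    [IsOrderedAddMonoid N] [DecidableEq κ] {s : Finset ι} {t : Finset κ} {g : ι → κ}
    {F : κ → N} (hF : ∀ i ∈ s, 0 ≤ F (g i)) (hg : Set.SurjOn g s t) :
    ∑ k ∈ t, F k ≤ ∑ i ∈ s, F (g i) := by
  have hts : t ⊆ s.image g := by
    intro k hk
    obtain ⟨i, hi, rfl⟩ := hg hk
    exact Finset.mem_image_of_mem g hi
  have himage : ∀ k ∈ s.image g, 0 ≤ F k := by
    simp only [Finset.mem_image, forall_exists_index, and_imp]
    rintro _ i hi rfl
    exact hF i hi
  calc ∑ k ∈ t, F k ≤ ∑ k ∈ s.image g, F k :=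
        Finset.sum_le_sum_of_subset_of_nonneg hts fun k hk _ ↦ himage k hk
    _ ≤ ∑ i ∈ s, F (g i) := Finset.sum_image_le_of_nonneg himage

def IsFinsuppIcc (f : ℤ × ℤ → ℝ) : Prop :=
  (∀ q, f q ∈ Set.Icc 0 1) ∧ (support f).Finite

lemma isFinsuppIcc_zero : IsFinsuppIcc 0 :=
  ⟨fun _ ↦ ⟨le_rfl, zero_le_one⟩, by simp⟩

lemma IsFinsuppIcc.pstep {f : ℤ × ℤ → ℝ} (hf : IsFinsuppIcc f) (c : ℤ × ℤ) :
    IsFinsuppIcc (pstep c f) := by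
  refine ⟨fun q ↦ ?_, ?_⟩
  · by_cases hD : q ∈ diamond c
    · simp [pstep_of_mem_diamond f hD]
    · obtain ⟨hH0, hH1⟩ := hf.1 (moveH c q)
      obtain ⟨hV0, hV1⟩ := hf.1 (moveV c q)
      rw [pstep_of_notMem_diamond f hD]
      constructor <;> linarith
  · exact (Finset.finite_toSet _).subset (support_pstep_subset hf.2.coe_toFinset.ge)

lemma four_add_finsum_le_finsum_pstep {f : ℤ × ℤ → ℝ} (hf : IsFinsuppIcc f) (c : ℤ × ℤ) :
    4 + ∑ᶠ q, f q ≤ ∑ᶠ q, pstep c f q := by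
  classical
  set T := hf.2.toFinset
  set B := diamond c ∪ T.biUnion diamond
  have hT : support f ⊆ T := hf.2.coe_toFinset.ge
  have hf0 : ∀ q, 0 ≤ f q := fun q ↦ (hf.1 q).1
  rw [finsum_eq_sum_of_support_subset _ (support_pstep_subset hT),
    finsum_eq_sum_of_support_subset _ hT, ← Finset.sum_sdiff Finset.subset_union_left]
  have hdiamond : ∑ q ∈ diamond c, pstep c f q = 5 := by
    rw [Finset.sum_congr rfl fun q hq ↦ pstep_of_mem_diamond f hq]
    simp [card_diamond]
  have houter : ∑ q ∈ B \ diamond c, pstep c f q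
      = (∑ q ∈ B \ diamond c, f (moveH c q) + ∑ q ∈ B \ diamond c, f (moveV c q)) / 2 := by
    rw [← Finset.sum_add_distrib, Finset.sum_div]
    exact Finset.sum_congr rfl fun q hq ↦ pstep_of_notMem_diamond f (Finset.mem_sdiff.mp hq).2
  have hpreimage {move : ℤ × ℤ → ℤ × ℤ}
      (hmove : ∀ r ≠ c, ∃ q ∉ diamond c, q ∈ diamond r ∧ move q = r) :
      ∑ r ∈ T.erase c, f r ≤ ∑ q ∈ B \ diamond c, f (move q) := by
    refine sum_le_sum_comp_of_surjOn (fun q _ ↦ hf0 _) fun r hr ↦ ?_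
    obtain ⟨hrc, hrT⟩ := Finset.mem_erase.mp hr
    obtain ⟨q, hqD, hqr, rfl⟩ := hmove r hrc
    refine ⟨q, ?_, rfl⟩
    simp only [B, Finset.coe_sdiff, Finset.coe_union, Set.mem_sdiff, Set.mem_union,
      Finset.mem_coe, Finset.mem_biUnion]
    exact ⟨Or.inr ⟨_, hrT, hqr⟩, hqD⟩
  have hH := hpreimage fun r ↦ exists_moveH_eq
  have hV := hpreimage fun r ↦ exists_moveV_eq
  have herase : ∑ q ∈ T, f q ≤ f c + ∑ r ∈ T.erase c, f r := by
    rw [← Finset.sum_insert (Finset.notMem_erase c T)]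
    exact Finset.sum_le_sum_of_subset_of_nonneg (Finset.insert_erase_subset c T)
      fun q _ _ ↦ hf0 q
  linarith [(hf.1 c).2]

lemma pAux_zero (S : ℕ → ℤ × ℤ) (M : ℕ) : pAux S M 0 = pstep (S M) 0 := by
  funext q
  simp only [pAux, pstep, Pi.zero_apply]
  split_ifs <;> simp

lemma pAux_isFinsuppIcc_and_le_finsum (S : ℕ → ℤ × ℤ) (M j : ℕ) :
    IsFinsuppIcc (pAux S M j) ∧ 4 * ((j : ℝ) + 1) ≤ ∑ᶠ q, pAux S M j q := by
  induction j with
  | zero =>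
    rw [pAux_zero]
    refine ⟨isFinsuppIcc_zero.pstep _, ?_⟩
    simpa using four_add_finsum_le_finsum_pstep isFinsuppIcc_zero (S M)
  | succ j ih =>
    refine ⟨ih.1.pstep _, ?_⟩
    have := four_add_finsum_le_finsum_pstep ih.1 (S (M - (j + 1)))
    push_cast
    simp only [pAux]
    linarith [ih.2]

end Zombies

theorem stmt_4_general (n : ℕ) (M : ℕ) (hM : M = n / 4) :
    (∀ S : ℕ → ℤ × ℤ, IsStrategy S M → 4 * (M : ℝ) ≤ tS S M) ∧
    (n : ℝ) - 4 ≤ 4 * (M : ℝ) := by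
  refine ⟨fun S _ ↦ ?_, ?_⟩
  · have hM1 : (M : ℝ) ≤ ((M - 1 : ℕ) : ℝ) + 1 := by norm_cast; omega
    have := (Zombies.pAux_isFinsuppIcc_and_le_finsum S M (M - 1)).2
    rw [tS, pS]
    linarith
  · have : (n : ℝ) ≤ 4 * M + 3 := by norm_cast; omega
    linarith

/-- Every strategy `S` satisfies `t(S) ≥ 4M` where `M = ⌊n/4⌋`; hence
`t_n = min_S t(S) ≥ 4⌊n/4⌋ ≥ n - 4`. Combined with Theorem 2.1 this gives
`z(Tₙ) = O(n²)`. -/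
theorem stmt_4 (n : ℕ) (hn : 8 ≤ n) (M : ℕ) (hM : M = n / 4) :
    (∀ S : ℕ → ℤ × ℤ, IsStrategy S M → 4 * (M : ℝ) ≤ tS S M) ∧
    (n : ℝ) - 4 ≤ 4 * (M : ℝ) :=
  stmt_4_general n M hM
end

section
/- For every integer n ≥ 8 with M = ⌊n/4⌋, every strategy S (with x-coordinate sequence (x_i)), every i with 1 ≤ i ≤ M, and every x ∈ ℤ, the consecutive differences of the function z^i are bounded by 4: |z^i(x) − z^i(x + 1)| ≤ 4. -/
open Finset

/-- `zAux xs M j` is the function `z^{M-j}` of the one-dimensional coupling: `zAux xs M 0 = z^M`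
(with `z^M(0) = 3`, `z^M(±1) = 1`, `z^M = 0` elsewhere), and `z^{i-1}` is obtained from `z^i`
using the survivor's `x`-coordinate `x_{i-1} = xs (i-1)` as the centre. -/
noncomputable def zAux (xs : ℕ → ℤ) (M : ℕ) : ℕ → ℤ → ℝ
  | 0 => fun x => if x = 0 then 3 else if x = 1 ∨ x = -1 then 1 else 0
  | j + 1 => fun x =>
      if x = xs (M - (j + 1)) then zAux xs M j x + 2
      else if xs (M - (j + 1)) < x then (zAux xs M j (x - 1) + zAux xs M j x) / 2
      else (zAux xs M j (x + 1) + zAux xs M j x) / 2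

/-- `zS S M i = z^i` (for `1 ≤ i ≤ M`), built from the `x`-coordinate sequence of `S`. -/
noncomputable def zS (S : ℕ → ℤ × ℤ) (M : ℕ) (i : ℕ) : ℤ → ℝ :=
  zAux (fun k => (S k).1) M (M - i)

/-! Induction on the number of backward steps. `z^M` takes values in `[0, 3]`. Away from the
centre, every value of `z^{i-1}` is the average of two neighbouring values of `z^i`, so a
difference of `z^{i-1}` is the average of two differences of `z^i`; across the centre it is
`±(2 + d/2)` for a difference `d` of `z^i`, hence again at most `4` in absolute value. -/

lemma zAux_zero_mem_Icc (xs : ℕ → ℤ) (M : ℕ) (x : ℤ) : zAux xs M 0 x ∈ Set.Icc 0 3 := by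
  simp only [zAux, Set.mem_Icc]
  split_ifs <;> norm_num

lemma abs_zAux_sub_zAux_add_one_le (xs : ℕ → ℤ) (M j : ℕ) (x : ℤ) :
    |zAux xs M j x - zAux xs M j (x + 1)| ≤ 4 := by
  induction j generalizing x with
  | zero =>
    obtain ⟨h₀, h₃⟩ := zAux_zero_mem_Icc xs M x
    obtain ⟨h₀', h₃'⟩ := zAux_zero_mem_Icc xs M (x + 1)
    rw [abs_le]
    constructor <;> linarith
  | succ j ih =>
    have hl := abs_le.mp (ih (x - 1))
    have hm := abs_le.mp (ih x)
    have hr := abs_le.mp (ih (x + 1))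
    rw [sub_add_cancel] at hl
    simp only [zAux, add_sub_cancel_right]
    split_ifs <;> first | omega | (rw [abs_le]; constructor <;> linarith)

theorem stmt_6_general (M : ℕ)
    (S : ℕ → ℤ × ℤ)
    (i : ℕ) (x : ℤ) :
    |zS S M i x - zS S M i (x + 1)| ≤ 4 :=
  abs_zAux_sub_zAux_add_one_le _ M (M - i) x

/-- Consecutive differences of `z^i` are bounded by `4`: for every strategy `S`, every
`1 ≤ i ≤ M` and every `x ∈ ℤ`, `|z^i(x) - z^i(x+1)| ≤ 4`. -/
theorem stmt_6 (n : ℕ) (hn : 8 ≤ n) (M : ℕ) (hM : M = n / 4)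
    (S : ℕ → ℤ × ℤ) (hS : IsStrategy S M)
    (i : ℕ) (hi1 : 1 ≤ i) (hi2 : i ≤ M) (x : ℤ) :
    |zS S M i x - zS S M i (x + 1)| ≤ 4 :=
  stmt_6_general M S i x
end

section
/- For every integer n ≥ 8 with M = ⌊n/4⌋, every strategy S (with x-coordinate sequence (x_i)), and every i with 2 ≤ i ≤ M: if x_{i−1} = x_i (the survivor pauses in the x-projection) then z^{i−1}(x_{i−1}) = z^i(x_i) + 2, while if x_{i−1} ≠ x_i (the survivor moves in the x-projection) then z^{i−1}(x_{i−1}) ≥ z^i(x_i) − 2. That is, the sequence (z^i(x_i)), followed from i = M down to i = 1, goes up by 2 at every pause and goes down by at most 2 at every move. -/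
open Finset

/-!
At a pause the claim is the recursion itself: `z^{i-1}` adds `2` to `z^i` at the centre
`x_{i-1}`. At a move `x_i = x_{i-1} ± 1`, so it suffices that every `z^i` changes by at most `4`
between neighbouring integers. This holds for `z^M` and is preserved by the recursion: away from
the centre, neighbouring differences of `z^{i-1}` are averages of those of `z^i`, and at the centre
the gain of `2` is offset by halving the adjacent difference of `z^i`.
-/

lemma zAux_succ_apply_of_eq (xs : ℕ → ℤ) (M j : ℕ) {x : ℤ} (hx : x = xs (M - (j + 1))) :
    zAux xs M (j + 1) x = zAux xs M j x + 2 := by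
  simp [zAux, hx]

lemma abs_zAux_sub_le_of_abs_sub_le_one (xs : ℕ → ℤ) (M j : ℕ) {x y : ℤ} (hxy : |x - y| ≤ 1) :
    |zAux xs M j x - zAux xs M j y| ≤ 4 := by
  rcases show y = x ∨ y = x + 1 ∨ x = y + 1 by rw [abs_le] at hxy; omega with rfl | rfl | rfl
  · simp
  · exact abs_zAux_sub_zAux_add_one_le xs M j x
  · rw [abs_sub_comm]
    exact abs_zAux_sub_zAux_add_one_le xs M j y

lemma zS_pred_apply_pred (S : ℕ → ℤ × ℤ) {M i : ℕ} (hi : 1 ≤ i) (hiM : i ≤ M) :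
    zS S M (i - 1) (S (i - 1)).1 = zS S M i (S (i - 1)).1 + 2 := by
  rw [zS, zS, show M - (i - 1) = M - i + 1 by omega]
  exact zAux_succ_apply_of_eq _ M _ (by simp only [show M - (M - i + 1) = i - 1 by omega])

lemma IsStrategy.abs_fst_succ_sub_le_one {S : ℕ → ℤ × ℤ} {M : ℕ} (hS : IsStrategy S M) {i : ℕ}
    (hi : 1 ≤ i) (hiM : i < M) : |(S (i + 1)).1 - (S i).1| ≤ 1 := by
  have := hS.2 i hi hiM
  linarith [abs_nonneg ((S (i + 1)).2 - (S i).2)]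

theorem stmt_7_general (M : ℕ)
    (S : ℕ → ℤ × ℤ) (hS : IsStrategy S M)
    (i : ℕ) (hi1 : 2 ≤ i) (hi2 : i ≤ M) :
    ((S (i - 1)).1 = (S i).1 → zS S M (i - 1) ((S (i - 1)).1) = zS S M i ((S i).1) + 2) ∧
    ((S (i - 1)).1 ≠ (S i).1 → zS S M i ((S i).1) - 2 ≤ zS S M (i - 1) ((S (i - 1)).1)) := by
  have hstep := zS_pred_apply_pred S (by omega : 1 ≤ i) hi2
  have hmove : |(S i).1 - (S (i - 1)).1| ≤ 1 := by
    simpa only [Nat.sub_add_cancel (by omega : 1 ≤ i)] using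
      hS.abs_fst_succ_sub_le_one (i := i - 1) (by omega) (by omega)
  refine ⟨fun hpause => by rw [hstep, hpause], fun _ => ?_⟩
  have hlip : |zS S M i (S i).1 - zS S M i (S (i - 1)).1| ≤ 4 :=
    abs_zAux_sub_le_of_abs_sub_le_one _ M _ hmove
  rw [hstep]
  linarith [(abs_le.1 hlip).2]

/-- Following the sequence `(z^i(x_i))` from `i = M` down to `i = 1`: it goes up by exactly
`2` when the survivor pauses in the `x`-projection (`x_{i-1} = x_i`) and goes down by at
most `2` when he moves (`x_{i-1} ≠ x_i`). -/
theorem stmt_7 (n : ℕ) (hn : 8 ≤ n) (M : ℕ) (hM : M = n / 4)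
    (S : ℕ → ℤ × ℤ) (hS : IsStrategy S M)
    (i : ℕ) (hi1 : 2 ≤ i) (hi2 : i ≤ M) :
    ((S (i - 1)).1 = (S i).1 → zS S M (i - 1) ((S (i - 1)).1) = zS S M i ((S i).1) + 2) ∧
    ((S (i - 1)).1 ≠ (S i).1 → zS S M i ((S i).1) - 2 ≤ zS S M (i - 1) ((S (i - 1)).1)) :=
  stmt_7_general M S hS i hi1 hi2
end

section
/- For every integer n ≥ 8 with M = ⌊n/4⌋, every strategy S, every i with 1 ≤ i ≤ M, and every x ∈ ℤ, the x-projection of p_S^i dominates z^i: q_S^i(x) := ∑_{y ∈ ℤ} p_S^i(x, y) ≥ z^i(x). -/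
open Finset

/-!
Fix the survivor's position `(a, b)` in round `i` and a row `v = p^{i+1}(x, ·)`. Moving every
`y ≠ b` one step towards `b` maps each of the half-lines `y > b`, `y < b` onto its closure, so
`∑_y v (y + sign (b - y)) = ∑_y v y + 2 v b`. In the survivor's column `x = a` the three cells
`|y - b| ≤ 1` are caught, which adds `3 (1 - v b) ≥ 2 - 2 v b`, so that row sum grows by at
least `2`. In a column `x ≠ a` every cell `y ≠ b` averages the neighbouring column
`u = p^{i+1}(x + sign (a - x), ·)` with `v` moved towards `b`, and the cell `y = b` is worth at
least `(u b - v b) / 2`, so the row sum is at least the average of the two row sums. These are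
the recursions defining `z^i`, with `≥`; and `p^M` has row sums exactly `z^M` because the
strategy ends at the origin.
-/

namespace Int

lemma abs_sign_le_one (z : ℤ) : |z.sign| ≤ 1 := by
  rcases lt_trichotomy z 0 with h | rfl | h
  · simp [sign_eq_neg_one_of_neg h]
  · simp
  · simp [sign_eq_one_of_pos h]

lemma add_sign_sub_eq_of_abs_sub_le_one {y b : ℤ} (h : |y - b| ≤ 1) : y + (b - y).sign = b := by
  rw [abs_le] at h
  rcases lt_trichotomy (b - y) 0 with h' | h' | h'
  · rw [sign_eq_neg_one_of_neg h']; omega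
  · rw [h', sign_zero]; omega
  · rw [sign_eq_one_of_pos h']; omega

end Int

open Function

section Ite

variable {α R : Type*} {p : α → Prop} [DecidablePred p]

lemma hasFiniteSupport_ite [Zero R] {v : α → R} (hv : HasFiniteSupport v) :
    HasFiniteSupport fun y => if p y then v y else 0 :=
  hv.subset fun y hy => by
    by_contra h
    exact hy (by simp [show v y = 0 by simpa using h])

lemma finsum_ite_eq_apply [AddCommMonoid R] [DecidableEq α] (v : α → R) (b : α) :
    ∑ᶠ y, (if y = b then v y else 0) = v b :=
  (finsum_eq_single _ b fun _ hy => if_neg hy).trans (if_pos rfl)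

end Ite

section MoveTowards

variable {v : ℤ → ℝ}

lemma hasFiniteSupport_comp_add_of_abs_le_one (hv : HasFiniteSupport v) (s : ℤ → ℤ)
    (hs : ∀ y, |s y| ≤ 1) : HasFiniteSupport fun y => v (y + s y) := by
  refine (Set.Finite.image2 (· - ·) hv (Set.finite_Icc (-1 : ℤ) 1)).subset fun y hy => ?_
  exact ⟨y + s y, hy, s y, abs_le.mp (hs y), by ring⟩

lemma finsum_comp_add_sign_sub (hv : HasFiniteSupport v) (b : ℤ) :
    ∑ᶠ y, v (y + (b - y).sign) = ∑ᶠ y, v y + 2 * v b := by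
  set above : ℤ → ℝ := fun y => if b ≤ y then v y else 0
  set below : ℤ → ℝ := fun y => if y ≤ b then v y else 0
  set atB : ℤ → ℝ := fun y => if y = b then v y else 0
  have h_above : HasFiniteSupport above := hasFiniteSupport_ite hv
  have h_below : HasFiniteSupport below := hasFiniteSupport_ite hv
  have h_above' : HasFiniteSupport fun y => above (y - 1) :=
    h_above.comp_of_injective sub_left_injective
  have h_below' : HasFiniteSupport fun y => below (y + 1) :=
    h_below.comp_of_injective (add_left_injective 1)
  have h_atB : ∑ᶠ y, atB y = v b := finsum_ite_eq_apply v b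
  have h_split : ∀ y, v (y + (b - y).sign) = above (y - 1) + below (y + 1) + atB y := by
    intro y
    rcases lt_trichotomy (b - y) 0 with h | h | h
    · simp only [above, below, atB, Int.sign_eq_neg_one_of_neg h]
      rw [if_pos (by omega), if_neg (by omega), if_neg (by omega)]
      ring_nf
    · simp only [above, below, atB, h, Int.sign_zero]
      rw [if_neg (by omega), if_neg (by omega), if_pos (by omega)]
      ring_nf
    · simp only [above, below, atB, Int.sign_eq_one_of_pos h]
      rw [if_neg (by omega), if_pos (by omega), if_neg (by omega)]
      ring_nf
  have h_overlap : ∀ y, above y + below y = v y + atB y := by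
    intro y
    simp only [above, below, atB]
    split_ifs <;> first | (exfalso; omega) | ring
  calc ∑ᶠ y, v (y + (b - y).sign)
      = ∑ᶠ y, above (y - 1) + ∑ᶠ y, below (y + 1) + ∑ᶠ y, atB y := by
        simp_rw [h_split]
        rw [finsum_add_distrib (f := fun y => above (y - 1) + below (y + 1))
            (h_above'.add h_below') (hasFiniteSupport_ite hv),
          finsum_add_distrib h_above' h_below']
    _ = ∑ᶠ y, (above y + below y) + v b := by
        rw [show ∑ᶠ y, above (y - 1) = ∑ᶠ y, above y from finsum_comp_equiv (Equiv.subRight 1),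
          show ∑ᶠ y, below (y + 1) = ∑ᶠ y, below y from finsum_comp_equiv (Equiv.addRight 1),
          h_atB, finsum_add_distrib h_above h_below]
    _ = ∑ᶠ y, v y + 2 * v b := by
        simp_rw [h_overlap]
        rw [finsum_add_distrib hv (hasFiniteSupport_ite hv), h_atB]
        ring

lemma support_ite_abs_sub_le_one_subset (c : ℝ) (b : ℤ) :
    (support fun y : ℤ => if |y - b| ≤ 1 then c else 0) ⊆ ({b - 1, b, b + 1} : Finset ℤ) := by
  intro y hy
  have := abs_le.mp (by_contra fun h => hy (if_neg h) : |y - b| ≤ 1)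
  simp only [Finset.coe_insert, Finset.coe_singleton, Set.mem_insert_iff, Set.mem_singleton_iff]
  omega

lemma finsum_ite_abs_sub_le_one (c : ℝ) (b : ℤ) :
    ∑ᶠ y : ℤ, (if |y - b| ≤ 1 then c else 0) = 3 * c := by
  rw [finsum_eq_sum_of_support_subset _ (support_ite_abs_sub_le_one_subset c b),
    Finset.sum_insert (by simp; omega), Finset.sum_insert (by simp), Finset.sum_singleton]
  norm_num
  ring

end MoveTowards

def HasFiniteRowSupport (f : ℤ × ℤ → ℝ) : Prop :=
  ∀ x, HasFiniteSupport fun y => f (x, y)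

section Pstep

variable (c : ℤ × ℤ) {f : ℤ × ℤ → ℝ}

lemma pstep_mem_Icc (hf : ∀ q, f q ∈ Set.Icc (0 : ℝ) 1) (q : ℤ × ℤ) :
    pstep c f q ∈ Set.Icc (0 : ℝ) 1 := by
  unfold pstep
  split_ifs
  · norm_num
  · obtain ⟨h1, h2⟩ := hf (q.1 + (c.1 - q.1).sign, q.2)
    obtain ⟨h3, h4⟩ := hf (q.1, q.2 + (c.2 - q.2).sign)
    constructor <;> linarith
  · exact hf _
  · exact hf _

lemma HasFiniteRowSupport.pstep (hf : HasFiniteRowSupport f) : HasFiniteRowSupport (pstep c f) := by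
  intro x
  refine (((Set.finite_Icc (c.2 - 1) (c.2 + 1)).union (hf (x + (c.1 - x).sign))).union
    (hasFiniteSupport_comp_add_of_abs_le_one (hf x) (fun y => (c.2 - y).sign)
      fun y => Int.abs_sign_le_one _)).subset ?_
  intro y hy
  simp only [Function.mem_support, _root_.pstep] at hy
  split_ifs at hy with h1 h2 h3
  · have := abs_le.mp (show |y - c.2| ≤ 1 by linarith [abs_nonneg (x - c.1)])
    left; left; exact ⟨by omega, by omega⟩
  · by_cases hA : f (x + (c.1 - x).sign, y) = 0
    · right; simpa [hA] using hy
    · left; right; exact hA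
  · right; exact hy
  · left; right; exact hy

lemma pstep_center_row (y : ℤ) :
    pstep c f (c.1, y) = f (c.1, y + (c.2 - y).sign) + if |y - c.2| ≤ 1 then 1 - f c else 0 := by
  unfold pstep
  simp only [sub_self, abs_zero, zero_add, ne_eq, not_true_eq_false, false_and, if_false, if_true]
  split_ifs with h
  · rw [Int.add_sign_sub_eq_of_abs_sub_le_one h]
    ring
  · ring

lemma finsum_pstep_center_row (hfin : HasFiniteRowSupport f) (hf : ∀ q, f q ≤ 1) :
    ∑ᶠ y, f (c.1, y) + 2 ≤ ∑ᶠ y, pstep c f (c.1, y) := by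
  have h_ite : HasFiniteSupport fun y : ℤ => if |y - c.2| ≤ 1 then 1 - f c else 0 :=
    (Finset.finite_toSet _).subset (support_ite_abs_sub_le_one_subset _ _)
  simp_rw [pstep_center_row]
  rw [finsum_add_distrib (hasFiniteSupport_comp_add_of_abs_le_one (hfin c.1) _
      fun y => Int.abs_sign_le_one _) h_ite,
    finsum_comp_add_sign_sub (hfin c.1), finsum_ite_abs_sub_le_one]
  linarith [hf c]

lemma pstep_off_center_row (hf : ∀ q, f q ∈ Set.Icc (0 : ℝ) 1) {x : ℤ} (hx : x ≠ c.1) (y : ℤ) :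
    f (x + (c.1 - x).sign, y) + f (x, y + (c.2 - y).sign) ≤
      2 * (pstep c f (x, y) + if y = c.2 then f (x, y) else 0) := by
  have hx' : 1 ≤ |x - c.1| := Int.one_le_abs (sub_ne_zero.mpr hx)
  unfold pstep
  dsimp only
  by_cases hy : y = c.2
  · subst hy
    obtain ⟨h1, h2⟩ := hf (x + (c.1 - x).sign, c.2)
    obtain ⟨h3, h4⟩ := hf (x, c.2)
    simp only [sub_self, Int.sign_zero, add_zero, abs_zero, ne_eq, not_true_eq_false,
      and_false, if_false, hx, if_true]
    split_ifs <;> linarith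
  · have hy' : 1 ≤ |y - c.2| := Int.one_le_abs (sub_ne_zero.mpr hy)
    rw [if_neg (by omega), if_pos ⟨hx, hy⟩, if_neg hy]
    linarith

lemma finsum_pstep_off_center_row (hf : ∀ q, f q ∈ Set.Icc (0 : ℝ) 1)
    (hfin : HasFiniteRowSupport f) {x : ℤ} (hx : x ≠ c.1) :
    (∑ᶠ y, f (x + (c.1 - x).sign, y) + ∑ᶠ y, f (x, y)) / 2 ≤ ∑ᶠ y, pstep c f (x, y) := by
  have h_row := hfin (x + (c.1 - x).sign)
  have h_moved := hasFiniteSupport_comp_add_of_abs_le_one (hfin x) (fun y => (c.2 - y).sign)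
    fun y => Int.abs_sign_le_one _
  have h_pstep := hfin.pstep c x
  have h_ite : HasFiniteSupport fun y => if y = c.2 then f (x, y) else 0 :=
    hasFiniteSupport_ite (hfin x)
  calc (∑ᶠ y, f (x + (c.1 - x).sign, y) + ∑ᶠ y, f (x, y)) / 2
      = (∑ᶠ y, (f (x + (c.1 - x).sign, y) + f (x, y + (c.2 - y).sign))) / 2 - f (x, c.2) := by
        rw [finsum_add_distrib h_row h_moved, finsum_comp_add_sign_sub (hfin x)]
        ring
    _ ≤ (∑ᶠ y, 2 * (pstep c f (x, y) + if y = c.2 then f (x, y) else 0)) / 2 - f (x, c.2) := by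
        gcongr
        exact finsum_le_finsum' (h_row.add h_moved) ((h_pstep.add h_ite).mul_right _)
          (pstep_off_center_row c hf hx)
    _ = ∑ᶠ y, pstep c f (x, y) := by
        rw [← mul_finsum, finsum_add_distrib h_pstep h_ite, finsum_ite_eq_apply (fun y => f (x, y))]
        ring

end Pstep

section Strategy

variable (S : ℕ → ℤ × ℤ) (M : ℕ)

lemma pAux_mem_Icc (j : ℕ) (q : ℤ × ℤ) : pAux S M j q ∈ Set.Icc (0 : ℝ) 1 := by
  induction j generalizing q with
  | zero => simp only [pAux]; split_ifs <;> norm_num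
  | succ j ih => exact pstep_mem_Icc _ ih q

lemma hasFiniteRowSupport_pAux (j : ℕ) : HasFiniteRowSupport (pAux S M j) := by
  induction j with
  | zero =>
    intro x
    refine (Set.finite_Icc ((S M).2 - 1) ((S M).2 + 1)).subset fun y hy => ?_
    have h : |x - (S M).1| + |y - (S M).2| ≤ 1 := by_contra fun h => hy (if_neg h)
    have := abs_le.mp (show |y - (S M).2| ≤ 1 by linarith [abs_nonneg (x - (S M).1)])
    exact ⟨by omega, by omega⟩
  | succ j ih => exact ih.pstep _

lemma finsum_pAux_zero (hS : S M = (0, 0)) (x : ℤ) :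
    ∑ᶠ y, pAux S M 0 (x, y) = zAux (fun k => (S k).1) M 0 x := by
  simp only [pAux, zAux, hS, sub_zero]
  split_ifs with h0 h1
  · simpa [h0] using finsum_ite_abs_sub_le_one 1 0
  · have hx : |x| = 1 := by rcases h1 with rfl | rfl <;> rfl
    refine (finsum_congr fun y => ?_).trans (finsum_ite_eq_apply (fun _ => (1 : ℝ)) 0)
    rw [hx]
    simp only [add_le_iff_nonpos_right, abs_nonpos_iff]
  · have hx : 2 ≤ |x| := by
      rcases abs_cases x with ⟨h, _⟩ | ⟨h, _⟩ <;> omega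
    refine (finsum_congr fun y => ?_).trans finsum_zero
    rw [if_neg (by linarith [abs_nonneg y])]

lemma zAux_succ (xs : ℕ → ℤ) (j : ℕ) (x : ℤ) :
    zAux xs M (j + 1) x =
      if x = xs (M - (j + 1)) then zAux xs M j x + 2
      else (zAux xs M j (x + (xs (M - (j + 1)) - x).sign) + zAux xs M j x) / 2 := by
  simp only [zAux]
  split_ifs with h1 h2
  · rfl
  · rw [Int.sign_eq_neg_one_of_neg (by omega), ← sub_eq_add_neg]
  · rw [Int.sign_eq_one_of_pos (by omega)]

lemma zAux_le_finsum_pAux (hS : S M = (0, 0)) (j : ℕ) (x : ℤ) :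
    zAux (fun k => (S k).1) M j x ≤ ∑ᶠ y, pAux S M j (x, y) := by
  induction j generalizing x with
  | zero => exact (finsum_pAux_zero S M hS x).ge
  | succ j ih =>
    set c := S (M - (j + 1))
    change _ ≤ ∑ᶠ y, pstep c (pAux S M j) (x, y)
    rw [zAux_succ]
    split_ifs with hx
    · rw [hx]
      linarith [ih c.1, finsum_pstep_center_row c (hasFiniteRowSupport_pAux S M j)
        fun q => (pAux_mem_Icc S M j q).2]
    · linarith [ih x, ih (x + (c.1 - x).sign), finsum_pstep_off_center_row c
        (pAux_mem_Icc S M j) (hasFiniteRowSupport_pAux S M j) hx]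

end Strategy

theorem stmt_8_general (M : ℕ)
    (S : ℕ → ℤ × ℤ) (hS : IsStrategy S M)
    (i : ℕ) (x : ℤ) :
    zS S M i x ≤ ∑ᶠ y : ℤ, pS S M i (x, y) :=
  zAux_le_finsum_pAux S M hS.1 (M - i) x

/-- The `x`-projection of `p_S^i` dominates `z^i`:
`q_S^i(x) = ∑_y p_S^i(x,y) ≥ z^i(x)` for every `1 ≤ i ≤ M` and every `x ∈ ℤ`. -/
theorem stmt_8 (n : ℕ) (hn : 8 ≤ n) (M : ℕ) (hM : M = n / 4)
    (S : ℕ → ℤ × ℤ) (hS : IsStrategy S M)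
    (i : ℕ) (hi1 : 1 ≤ i) (hi2 : i ≤ M) (x : ℤ) :
    zS S M i x ≤ ∑ᶠ y : ℤ, pS S M i (x, y) :=
  stmt_8_general M S hS i x
end
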